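/- If B is an abelian group of the form D ⊕ E with D divisible and E elementary, then every subgroup A of B which is itself of the form (divisible) ⊕ (elementary) is an essential subgroup of some direct summand of B. -/

import Mathlib

/-- The subgroup of elements annihilated by some power of `p`
(the `p`-primary component). -/
def pComponent (G : Type*) [AddCommGroup G] (p : ℕ) : AddSubgroup G where
  carrier := {x | ∃ k : ℕ, p ^ k • x = 0}
  zero_mem' := ⟨0, smul_zero _⟩
  add_mem' := by
    rintro a b ⟨k, hk⟩ ⟨l, hl⟩
    exact ⟨k + l, by
      rw [smul_add, pow_add, mul_smul, mul_smul, smul_comm (p ^ k) (p ^ l) a, hk, hl,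
        smul_zero, smul_zero, add_zero]⟩
  neg_mem' := by
    rintro a ⟨k, hk⟩
    exact ⟨k, by rw [smul_neg, hk, neg_zero]⟩

/-- The torsion subgroup. -/
def torsionSub (G : Type*) [AddCommGroup G] : AddSubgroup G where
  carrier := {x | ∃ n : ℕ, 0 < n ∧ n • x = 0}
  zero_mem' := ⟨1, one_pos, smul_zero _⟩
  add_mem' := by
    rintro a b ⟨m, hm, hma⟩ ⟨n, hn, hnb⟩
    exact ⟨m * n, Nat.mul_pos hm hn, by
      rw [smul_add, mul_smul, mul_smul, smul_comm m n a, hma, hnb, smul_zero, smul_zero,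
        add_zero]⟩
  neg_mem' := by
    rintro a ⟨n, hn, hna⟩
    exact ⟨n, hn, by rw [smul_neg, hna, neg_zero]⟩

/-- A subgroup `A` is essential in a direct summand of the ambient group. -/
def EssentialInSummand {G : Type*} [AddCommGroup G] (A : AddSubgroup G) : Prop :=
  ∃ S S' : AddSubgroup G, IsCompl S S' ∧ A ≤ S ∧
    ∀ X : AddSubgroup G, X ≤ S → X ≠ ⊥ → A ⊓ X ≠ ⊥

/-- Semi-generalized co-Bassian group. -/
def IsSGCB (G : Type*) [AddCommGroup G] : Prop :=
  ∀ (N : AddSubgroup G) (φ : G →+ G ⧸ N), Function.Injective φ →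
    EssentialInSummand φ.range

/-- Divisible abelian group. -/
def IsDivisibleGroup (G : Type*) [AddCommGroup G] : Prop :=
  ∀ (x : G) (n : ℕ), 0 < n → ∃ y : G, n • y = x

/-- Elementary abelian group: torsion, and each `p`-primary component is killed by `p`. -/
def IsElementaryGroup (G : Type*) [AddCommGroup G] : Prop :=
  (∀ x : G, ∃ n : ℕ, 0 < n ∧ n • x = 0) ∧
    ∀ p : ℕ, p.Prime → ∀ x : G, x ∈ pComponent G p → p • x = 0

/-- `G` decomposes as (divisible) ⊕ (elementary). -/
def IsDplusE (G : Type*) [AddCommGroup G] : Prop :=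
  ∃ D E : AddSubgroup G, IsCompl D E ∧ IsDivisibleGroup ↥D ∧ IsElementaryGroup ↥E

/-- The Prüfer `p`-group, realized as the `p`-primary component of `ℚ/ℤ`. -/
def PruferGroup (p : ℕ) : Type :=
  ↥(pComponent (ℚ ⧸ AddSubgroup.zmultiples (1 : ℚ)) p)

instance (p : ℕ) : AddCommGroup (PruferGroup p) :=
  inferInstanceAs (AddCommGroup ↥(pComponent (ℚ ⧸ AddSubgroup.zmultiples (1 : ℚ)) p))

/-- `Z_{p^α}` for `α ∈ ℕ ∪ {∞}`: the cyclic group `ZMod (p^n)` for `α = n` finite,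
and the Prüfer `p`-group for `α = ∞`. -/
def Zp (p : ℕ) (α : ℕ∞) : Type :=
  WithTop.recTopCoe (PruferGroup p) (fun n => ZMod (p ^ n)) α

instance (p : ℕ) (α : ℕ∞) : AddCommGroup (Zp p α) := by
  induction α using WithTop.recTopCoe with
  | top => exact inferInstanceAs (AddCommGroup (PruferGroup p))
  | coe n => exact inferInstanceAs (AddCommGroup (ZMod (p ^ n)))

/-- A `p`-group has generalized finite `p`-rank if it is a finite direct sum of
homocyclic components `Z_{p^{σ_j}}^{(ρ_j)}` with `σ_1 < ⋯ < σ_n` in `ω ∪ {∞}` and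
`ρ_j` finite for all `j > 1`. -/
def HasGenFiniteRank (p : ℕ) (H : Type u) [AddCommGroup H] : Prop :=
  ∃ (n : ℕ) (σ : Fin n → ℕ∞) (ρ : Fin n → Type u),
    StrictMono σ ∧ (∀ j : Fin n, 0 < j.val → Finite (ρ j)) ∧
      Nonempty (H ≃+ DirectSum (Fin n) (fun j => ρ j →₀ Zp p (σ j)))


/-- Hopfian group: every surjective endomorphism is injective. -/
def IsHopfian (G : Type*) [AddCommGroup G] : Prop :=
  ∀ φ : G →+ G, Function.Surjective φ → Function.Injective φ

/-- co-Bassian group. -/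
def IsCoBassian (G : Type*) [AddCommGroup G] : Prop :=
  ∀ (N : AddSubgroup G) (φ : G →+ G ⧸ N), Function.Injective φ → Function.Surjective φ

/-- generalized co-Bassian group. -/
def IsGenCoBassian (G : Type*) [AddCommGroup G] : Prop :=
  ∀ (N : AddSubgroup G) (φ : G →+ G ⧸ N), Function.Injective φ →
    ∃ S' : AddSubgroup (G ⧸ N), IsCompl φ.range S'

/-- The subgroup `pG` of an abelian group `G`. -/
def smulSub (p : ℕ) (G : Type*) [AddCommGroup G] : AddSubgroup G :=
  (AddMonoidHom.mk' (fun x : G => p • x) (fun a b => smul_add p a b)).range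


namespace DplusEAux

variable {B : Type*} [AddCommGroup B]

/-- Divisibility of a subgroup, stated internally. -/
def Div (V : AddSubgroup B) : Prop := ∀ v ∈ V, ∀ n : ℕ, 0 < n → ∃ w ∈ V, n • w = v

/-- Elementary-ness of a subgroup, stated internally. -/
def Elem (V : AddSubgroup B) : Prop :=
  (∀ v ∈ V, ∃ n : ℕ, 0 < n ∧ n • v = 0) ∧
    ∀ p : ℕ, p.Prime → ∀ v ∈ V, (∃ k : ℕ, p ^ k • v = 0) → p • v = 0

/-- Essentiality of `A` in `S`, elementwise. -/
def Ess (A S : AddSubgroup B) : Prop := ∀ s ∈ S, s ≠ 0 → ∃ n : ℤ, n • s ∈ A ∧ n • s ≠ 0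

theorem Ess.refl (A : AddSubgroup B) : Ess A A :=
  fun s hs h0 => ⟨1, by simpa using hs, by simpa using h0⟩

theorem Ess.sup {A₁ S₁ A₂ S₂ : AddSubgroup B} (h₁ : Ess A₁ S₁) (h₂ : Ess A₂ S₂)
    (hA₁ : A₁ ≤ S₁) (hA₂ : A₂ ≤ S₂) (hd : S₁ ⊓ S₂ = ⊥) : Ess (A₁ ⊔ A₂) (S₁ ⊔ S₂) := by
  intro s hs hs0
  obtain ⟨x, hx, y, hy, rfl⟩ := AddSubgroup.mem_sup.mp hs
  by_cases hx0 : x = 0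
  · subst hx0
    obtain ⟨n, hn1, hn2⟩ := h₂ y hy (by simpa using hs0)
    exact ⟨n, AddSubgroup.mem_sup_right (by simpa using hn1), by simpa using hn2⟩
  · obtain ⟨n, hn1, hn2⟩ := h₁ x hx hx0
    by_cases hy0 : n • y = 0
    · refine ⟨n, ?_, ?_⟩
      · rw [smul_add, hy0, add_zero]; exact AddSubgroup.mem_sup_left hn1
      · rw [smul_add, hy0, add_zero]; exact hn2
    · obtain ⟨m, hm1, hm2⟩ := h₂ (n • y) (AddSubgroup.zsmul_mem _ hy n) hy0
      refine ⟨m * n, ?_, ?_⟩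
      · rw [smul_add, mul_smul, mul_smul]
        exact AddSubgroup.add_mem _ (AddSubgroup.mem_sup_left (AddSubgroup.zsmul_mem _ hn1 m))
          (AddSubgroup.mem_sup_right hm1)
      · rw [smul_add, mul_smul, mul_smul]
        intro hzero
        have h1 : m • n • x ∈ S₁ := AddSubgroup.zsmul_mem _ (hA₁ hn1) m
        have h2 : m • n • y ∈ S₁ := by
          rw [eq_neg_of_add_eq_zero_right hzero]
          exact AddSubgroup.neg_mem _ h1
        have : m • n • y ∈ S₁ ⊓ S₂ := ⟨h2, hA₂ hm1⟩
        rw [hd] at this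
        exact hm2 this


theorem exists_ne_zero_of_ne_bot {H : AddSubgroup B} (h : H ≠ ⊥) : ∃ x ∈ H, x ≠ 0 := by
  by_contra hc
  push_neg at hc
  exact h (le_antisymm (fun x hx => by simpa using hc x hx) bot_le)

theorem exists_maximal_zorn (U Z W : AddSubgroup B) (hZU : Z ≤ U) (hZW : W ⊓ Z = ⊥) :
    ∃ Y : AddSubgroup B, (Y ≤ U ∧ Z ≤ Y ∧ W ⊓ Y = ⊥) ∧
      ∀ Y', Y' ≤ U → Z ≤ Y' → W ⊓ Y' = ⊥ → Y ≤ Y' → Y' = Y := by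
  set s : Set (AddSubgroup B) := {Y | Y ≤ U ∧ Z ≤ Y ∧ W ⊓ Y = ⊥} with hs
  have hZs : Z ∈ s := ⟨hZU, le_refl Z, hZW⟩
  have hchains : ∀ c ⊆ s, IsChain (· ≤ ·) c → ∀ y ∈ c, ∃ ub ∈ s, ∀ z ∈ c, z ≤ ub := by
    intro c hcs hchain y hyc
    refine ⟨sSup c, ⟨?_, ?_, ?_⟩, fun z hz => le_sSup hz⟩
    · exact sSup_le (fun T hT => (hcs hT).1)
    · exact le_trans (hcs hyc).2.1 (le_sSup hyc)
    · rw [eq_bot_iff]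
      intro x hx
      have hxW : x ∈ W := hx.1
      have hxs : x ∈ sSup c := hx.2
      rw [AddSubgroup.mem_sSup_of_directedOn ⟨y, hyc⟩ hchain.directedOn] at hxs
      obtain ⟨T, hTc, hxT⟩ := hxs
      have : x ∈ W ⊓ T := ⟨hxW, hxT⟩
      rwa [(hcs hTc).2.2] at this
  obtain ⟨Y, -, hYmax⟩ := zorn_le_nonempty₀ s hchains Z hZs
  refine ⟨Y, hYmax.prop, fun Y' h1 h2 h3 h4 => ?_⟩
  exact le_antisymm (hYmax.2 ⟨h1, h2, h3⟩ h4) h4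

theorem Div.map {M N : Type*} [AddCommGroup M] [AddCommGroup N] {V : AddSubgroup M}
    (hV : Div V) (f : M →+ N) : Div (V.map f) := by
  rintro v ⟨x, hx, rfl⟩ n hn
  obtain ⟨w, hw, hwx⟩ := hV x hx n hn
  exact ⟨f w, ⟨w, hw, rfl⟩, by rw [← map_nsmul, hwx]⟩

theorem Elem.map {M N : Type*} [AddCommGroup M] [AddCommGroup N] {V : AddSubgroup M}
    (hV : Elem V) (f : M →+ N) (hf : Function.Injective f) : Elem (V.map f) := by
  constructor
  · rintro v ⟨x, hx, rfl⟩
    obtain ⟨n, hn, hnx⟩ := hV.1 x hx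
    exact ⟨n, hn, by rw [← map_nsmul, hnx, map_zero]⟩
  · rintro p hp v ⟨x, hx, rfl⟩ ⟨k, hk⟩
    have hk' : p ^ k • x = 0 := by
      apply hf; rw [map_nsmul, hk, map_zero]
    rw [← map_nsmul, hV.2 p hp x hx ⟨k, hk'⟩, map_zero]

/-- A divisible subgroup admits a retraction of the ambient group onto it. -/
theorem retraction_of_div (V : AddSubgroup B) (hV : Div V) :
    ∃ r : B →+ B, (∀ v ∈ V, r v = v) ∧ ∀ b, r b ∈ V := by
  have key : ∀ (a : ↥V) (n : ℤ), n ≠ 0 → ∃ w : ↥V, n • w = a := by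
    intro a n hn
    obtain ⟨w, hw, hwa⟩ := hV a a.2 n.natAbs (Int.natAbs_pos.mpr hn)
    refine ⟨(Int.sign n) • ⟨w, hw⟩, ?_⟩
    apply Subtype.ext
    have h1 : (n * Int.sign n) = (n.natAbs : ℤ) := by
      rcases Int.lt_or_lt_of_ne hn with h | h
      · rw [Int.sign_eq_neg_one_of_neg h, mul_neg_one, ← Int.ofNat_natAbs_of_nonpos h.le]
      · rw [Int.sign_eq_one_of_pos h, mul_one, Int.natAbs_of_nonneg h.le]
    calc ((n • (Int.sign n • (⟨w, hw⟩ : ↥V)) : ↥V) : B)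
        = (n * Int.sign n) • w := by push_cast [smul_smul]; rfl
      _ = (n.natAbs : ℤ) • w := by rw [h1]
      _ = a := by rw [natCast_zsmul, hwa]
  have hdiv : DivisibleBy ↥V ℤ :=
    { div := fun a n => if h : n = 0 then 0 else (key a n h).choose
      div_zero := fun a => by simp
      div_cancel := fun {n} a hn => by
        simpa only [dif_neg hn] using (key a n hn).choose_spec }
  have hbaer : Module.Baer ℤ ↥V := Module.Baer.of_divisible ↥V
  obtain ⟨h, hh⟩ := hbaer.extension_property_addMonoidHom V.subtype Subtype.val_injective
    (AddMonoidHom.id ↥V)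
  refine ⟨V.subtype.comp h, fun v hv => ?_, fun b => (h b).2⟩
  have := DFunLike.congr_fun hh (⟨v, hv⟩ : ↥V)
  simpa using congrArg Subtype.val this


theorem compl_in_of_div (V C : AddSubgroup B) (hV : Div V) (hVC : V ≤ C) :
    ∃ W, W ≤ C ∧ V ⊓ W = ⊥ ∧ V ⊔ W = C := by
  obtain ⟨r, hr1, hr2⟩ := retraction_of_div V hV
  refine ⟨C ⊓ r.ker, inf_le_left, ?_, ?_⟩
  · rw [eq_bot_iff]
    rintro x ⟨hxV, -, hxk⟩
    have : r x = 0 := hxk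
    rw [hr1 x hxV] at this
    simpa using this
  · refine le_antisymm (sup_le hVC inf_le_left) ?_
    intro c hc
    refine AddSubgroup.mem_sup.mpr ⟨r c, hr2 c, c - r c, ⟨AddSubgroup.sub_mem _ hc (hVC (hr2 c)), ?_⟩, add_sub_cancel _ _⟩
    have : r (c - r c) = r c - r (r c) := by rw [map_sub]
    rw [hr1 (r c) (hr2 c)] at this
    simpa [AddMonoidHom.mem_ker] using this

theorem compl_containing (V K : AddSubgroup B) (hV : Div V) (hVK : V ⊓ K = ⊥) :
    ∃ C, K ≤ C ∧ V ⊓ C = ⊥ ∧ V ⊔ C = ⊤ := by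
  let q := QuotientAddGroup.mk' K
  obtain ⟨W, -, hinf, hsup⟩ := compl_in_of_div (V.map q) ⊤ (hV.map q) le_top
  refine ⟨W.comap q, ?_, ?_, ?_⟩
  · intro k hk
    have : q k = 0 := (QuotientAddGroup.eq_zero_iff k).mpr hk
    simp only [AddSubgroup.mem_comap, this]
    exact AddSubgroup.zero_mem W
  · rw [eq_bot_iff]
    rintro x ⟨hxV, hxC⟩
    have : q x ∈ V.map q ⊓ W := ⟨⟨x, hxV, rfl⟩, hxC⟩
    rw [hinf] at this
    have hxK : x ∈ K := (QuotientAddGroup.eq_zero_iff x).mp this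
    have : x ∈ V ⊓ K := ⟨hxV, hxK⟩
    rwa [hVK] at this
  · rw [eq_top_iff]
    intro b _
    have : q b ∈ V.map q ⊔ W := by rw [hsup]; trivial
    obtain ⟨v', ⟨v, hv, rfl⟩, w, hw, hvw⟩ := AddSubgroup.mem_sup.mp this
    refine AddSubgroup.mem_sup.mpr ⟨v, hv, b - v, ?_, by abel⟩
    have : q (b - v) = w := by rw [map_sub, ← hvw]; abel
    simp only [AddSubgroup.mem_comap, this]
    exact hw

theorem proj_of_compl (U V : AddSubgroup B) (hinf : U ⊓ V = ⊥) (hsup : U ⊔ V = ⊤) :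
    ∃ π : B →+ B, (∀ u ∈ U, π u = u) ∧ (∀ v ∈ V, π v = 0) ∧ (∀ b, π b ∈ U) ∧
      (∀ b, b - π b ∈ V) := by
  have hc : IsCompl U V := ⟨disjoint_iff.mpr hinf, codisjoint_iff.mpr hsup⟩
  have hc' : IsCompl (AddSubgroup.toIntSubmodule U) (AddSubgroup.toIntSubmodule V) :=
    AddSubgroup.toIntSubmodule.isCompl hc
  let p := Submodule.linearProjOfIsCompl _ _ hc'
  refine ⟨((AddSubgroup.toIntSubmodule U).subtype.comp p).toAddMonoidHom, ?_, ?_, ?_, ?_⟩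
  · intro u hu
    have := Submodule.projectionOnto_apply_left hc' ⟨u, hu⟩
    exact congrArg Subtype.val this
  · intro v hv
    have := Submodule.projectionOnto_apply_of_mem_right hc' hv
    exact congrArg Subtype.val this
  · intro b
    exact (p b).2
  · intro b
    have hmem : b - ((AddSubgroup.toIntSubmodule U).subtype.comp p) b ∈
        LinearMap.ker p := by
      rw [LinearMap.mem_ker, map_sub]
      have : p (((AddSubgroup.toIntSubmodule U).subtype.comp p) b) = p b := by
        exact Submodule.linearProjOfIsCompl_apply_left hc' (p b)
      rw [this, sub_self]
    rw [show LinearMap.ker p = _ from Submodule.ker_projectionOnto hc'] at hmem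
    exact hmem


theorem Elem.mono {V V' : AddSubgroup B} (h : V ≤ V') (hE : Elem V') : Elem V :=
  ⟨fun v hv => hE.1 v (h hv), fun p hp v hv => hE.2 p hp v (h hv)⟩

theorem Elem.le_of_prime_gen {F W : AddSubgroup B} (hF : Elem F)
    (H : ∀ g ∈ F, ∀ p : ℕ, p.Prime → p • g = 0 → g ∈ W) : F ≤ W := by
  suffices aux : ∀ n : ℕ, ∀ f ∈ F, 0 < n → n • f = 0 → f ∈ W by
    intro f hf
    obtain ⟨n, hn, hnf⟩ := hF.1 f hf
    exact aux n f hf hn hnf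
  intro n
  induction n using Nat.strong_induction_on with
  | _ n ih =>
    intro f hf hn hnf
    rcases eq_or_lt_of_le (show 1 ≤ n from hn) with h1 | h1
    · have : f = 0 := by
        have := hnf
        rw [← h1] at this
        simpa using this
      rw [this]; exact AddSubgroup.zero_mem W
    · by_cases hsq : Squarefree n
      · set p := n.minFac with hp
        have hn1 : n ≠ 1 := by omega
        have hpp : p.Prime := Nat.minFac_prime hn1
        set m := n / p with hm
        have hpm : p * m = n := Nat.mul_div_cancel' (Nat.minFac_dvd n)
        have hm0 : 0 < m := by
          rcases Nat.eq_zero_or_pos m with h | h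
          · rw [h, mul_zero] at hpm; omega
          · exact h
        have hcop : Nat.Coprime p m := by
          rw [Nat.Prime.coprime_iff_not_dvd hpp]
          intro hdvd
          obtain ⟨e, he⟩ := hdvd
          have : p * p ∣ n := ⟨e, by rw [← hpm, he]; ring⟩
          exact hpp.not_isUnit (hsq p this)
        obtain ⟨a, b, hab⟩ := (Nat.isCoprime_iff_coprime.mpr hcop)
        have hmf : m • f ∈ W := by
          apply H (m • f) (AddSubgroup.nsmul_mem _ hf m) p hpp
          rw [smul_smul, hpm, hnf]
        have hpf : p • f ∈ W := by
          apply ih m ?_ (p • f) (AddSubgroup.nsmul_mem _ hf p) hm0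
          · rw [smul_smul, mul_comm, hpm, hnf]
          · calc m = 1 * m := (one_mul m).symm
              _ < p * m := by
                exact (Nat.mul_lt_mul_right hm0).mpr hpp.one_lt
              _ = n := hpm
        have hf_eq : f = a • (p • f) + b • (m • f) := by
          have : ((a * p + b * m : ℤ)) • f = f := by rw [hab, one_smul]
          calc f = (a * (p : ℤ) + b * (m : ℤ)) • f := this.symm
            _ = (a * (p:ℤ)) • f + (b * (m:ℤ)) • f := add_smul _ _ f
            _ = a • ((p:ℤ) • f) + b • ((m:ℤ) • f) := by rw [mul_smul, mul_smul]
            _ = a • (p • f) + b • (m • f) := by rw [natCast_zsmul, natCast_zsmul]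
        rw [hf_eq]
        exact AddSubgroup.add_mem _ (AddSubgroup.zsmul_mem _ hpf a)
          (AddSubgroup.zsmul_mem _ hmf b)
      · obtain ⟨p, hp, hpp⟩ := by
          rw [Nat.squarefree_iff_prime_squarefree] at hsq
          push_neg at hsq
          exact hsq
        have hp' : p.Prime := hp
        obtain ⟨m, hm⟩ := hpp
        have hm0 : 0 < m := by
          rcases Nat.eq_zero_or_pos m with h | h
          · rw [h, mul_zero] at hm; omega
          · exact h
        have hkill : (p * m) • f = 0 := by
          have h2 : p ^ 2 • (m • f) = 0 := by
            rw [smul_smul, pow_two, ← hm, hnf] -- check assoc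
          have := hF.2 p hp' (m • f) (AddSubgroup.nsmul_mem _ hf m) ⟨2, h2⟩
          rw [mul_smul]
          exact this
        apply ih (p * m) ?_ f hf (Nat.mul_pos hp'.pos hm0) hkill
        calc p * m = 1 * (p * m) := (one_mul _).symm
          _ < p * (p * m) := by
            exact (Nat.mul_lt_mul_right (Nat.mul_pos hp'.pos hm0)).mpr hp'.one_lt
          _ = n := by rw [hm]; ring


theorem int_coprime_of_prime_not_dvd {p : ℕ} (hp : p.Prime) {k : ℤ} (h : ¬ (p:ℤ) ∣ k) :
    ∃ a b : ℤ, a * k + b * p = 1 := by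
  have hg : Int.gcd k p = 1 := by
    have h1 : (Int.gcd k p) ∣ p := by
      have := Int.gcd_dvd_right (a := k) (b := (p:ℤ))
      exact_mod_cast Int.ofNat_dvd.mp (by exact_mod_cast this)
    rcases (Nat.dvd_prime hp).mp h1 with h2 | h2
    · exact h2
    · exfalso
      apply h
      have := Int.gcd_dvd_left (a := k) (b := (p:ℤ))
      rwa [h2] at this
  obtain ⟨a, b, hab⟩ := Int.isCoprime_iff_gcd_eq_one.mpr hg
  exact ⟨a, b, hab⟩

theorem elem_compl {F X : AddSubgroup B} (hF : Elem F) (hX : X ≤ F) :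
    ∃ Y, Y ≤ F ∧ X ⊓ Y = ⊥ ∧ X ⊔ Y = F := by
  obtain ⟨Y, ⟨hYF, -, hXY⟩, hmax⟩ := exists_maximal_zorn F ⊥ X bot_le (by simp)
  refine ⟨Y, hYF, hXY, ?_⟩
  refine le_antisymm (sup_le hX hYF) ?_
  apply hF.le_of_prime_gen
  intro g hg p hp hpg
  by_contra hgW
  set Y' := Y ⊔ AddSubgroup.zmultiples g with hY'
  have hgY : g ∉ Y := fun h => hgW (AddSubgroup.mem_sup_right h)
  have hne : ¬ (X ⊓ Y' = ⊥) := by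
    intro hbot
    have hY'F : Y' ≤ F := sup_le hYF (by
      rintro z hz
      obtain ⟨k, rfl⟩ := AddSubgroup.mem_zmultiples_iff.mp hz
      exact AddSubgroup.zsmul_mem _ hg k)
    have := hmax Y' hY'F bot_le hbot le_sup_left
    apply hgY
    rw [← this]
    exact AddSubgroup.mem_sup_right (AddSubgroup.mem_zmultiples g)
  obtain ⟨x, hx, hx0⟩ := exists_ne_zero_of_ne_bot hne
  obtain ⟨hxX, hxY'⟩ := hx
  obtain ⟨y, hy, z, hz, hyz⟩ := AddSubgroup.mem_sup.mp hxY'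
  obtain ⟨k, rfl⟩ := AddSubgroup.mem_zmultiples_iff.mp hz
  have hkg0 : k • g ≠ 0 := by
    intro h
    rw [h, add_zero] at hyz
    rw [hyz] at hy
    have : x ∈ X ⊓ Y := ⟨hxX, hy⟩
    rw [hXY] at this
    exact hx0 this
  have hpk : ¬ ((p : ℤ) ∣ k) := by
    rintro ⟨k', rfl⟩
    apply hkg0
    rw [mul_comm, mul_smul, natCast_zsmul, hpg, smul_zero]
  obtain ⟨a, b, hab⟩ := int_coprime_of_prime_not_dvd hp hpk
  apply hgW
  have hgeq : g = a • (k • g) + b • ((p:ℤ) • g) := by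
    calc g = (a * k + b * (p:ℤ)) • g := by rw [hab, one_smul]
      _ = (a * k) • g + (b * (p:ℤ)) • g := add_smul _ _ g
      _ = a • (k • g) + b • ((p:ℤ) • g) := by rw [mul_smul, mul_smul]
  have hpg' : (p:ℤ) • g = 0 := by rw [natCast_zsmul, hpg]
  rw [hgeq, hpg', smul_zero, add_zero]
  have hkgXY : k • g ∈ X ⊔ Y := by
    have : k • g = x - y := by rw [← hyz]; abel
    rw [this]
    exact AddSubgroup.sub_mem _ (AddSubgroup.mem_sup_left hxX) (AddSubgroup.mem_sup_right hy)
  exact AddSubgroup.zsmul_mem _ hkgXY a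

theorem Elem.squarefree_order {F : AddSubgroup B} (hF : Elem F) :
    ∀ f ∈ F, ∃ n : ℕ, 0 < n ∧ Squarefree n ∧ n • f = 0 := by
  suffices aux : ∀ n : ℕ, ∀ f ∈ F, 0 < n → n • f = 0 →
      ∃ m : ℕ, 0 < m ∧ Squarefree m ∧ m • f = 0 by
    intro f hf
    obtain ⟨n, hn, hnf⟩ := hF.1 f hf
    exact aux n f hf hn hnf
  intro n
  induction n using Nat.strong_induction_on with
  | _ n ih =>
    intro f hf hn hnf
    by_cases hsq : Squarefree n
    · exact ⟨n, hn, hsq, hnf⟩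
    · obtain ⟨p, hp, hpp⟩ := by
        rw [Nat.squarefree_iff_prime_squarefree] at hsq
        push_neg at hsq
        exact hsq
      obtain ⟨m, hm⟩ := hpp
      have hm0 : 0 < m := by
        rcases Nat.eq_zero_or_pos m with h | h
        · rw [h, mul_zero] at hm; omega
        · exact h
      have hkill : (p * m) • f = 0 := by
        have h2 : p ^ 2 • (m • f) = 0 := by
          rw [smul_smul, pow_two, ← hm, hnf]
        have := hF.2 p hp (m • f) (AddSubgroup.nsmul_mem _ hf m) ⟨2, h2⟩
        rw [mul_smul]
        exact this
      apply ih (p * m) ?_ f hf (Nat.mul_pos hp.pos hm0) hkill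
      calc p * m = 1 * (p * m) := (one_mul _).symm
        _ < p * (p * m) := (Nat.mul_lt_mul_right (Nat.mul_pos hp.pos hm0)).mpr hp.one_lt
        _ = n := by rw [hm]; ring

theorem squarefree_lcm' {a b : ℕ} (ha : Squarefree a) (hb : Squarefree b) :
    Squarefree (Nat.lcm a b) := by
  have ha0 : a ≠ 0 := ha.ne_zero
  have hb0 : b ≠ 0 := hb.ne_zero
  rw [Nat.squarefree_iff_factorization_le_one (Nat.lcm_ne_zero ha0 hb0)]
  intro p
  rw [Nat.factorization_lcm ha0 hb0, Finsupp.sup_apply]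
  exact sup_le ((Nat.squarefree_iff_factorization_le_one ha0).mp ha p)
    ((Nat.squarefree_iff_factorization_le_one hb0).mp hb p)

/-- The socle-like subgroup: elements of `Dp` annihilated by a squarefree number. -/
def soc (Dp : AddSubgroup B) : AddSubgroup B where
  carrier := {x | x ∈ Dp ∧ ∃ n : ℕ, 0 < n ∧ Squarefree n ∧ n • x = 0}
  zero_mem' := ⟨Dp.zero_mem, 1, one_pos, squarefree_one, smul_zero _⟩
  add_mem' := by
    rintro x y ⟨hx, nx, hnx, hsx, hnxx⟩ ⟨hy, ny, hny, hsy, hnyy⟩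
    refine ⟨Dp.add_mem hx hy, Nat.lcm nx ny, ?_, squarefree_lcm' hsx hsy, ?_⟩
    · exact Nat.pos_of_ne_zero (Nat.lcm_ne_zero hsx.ne_zero hsy.ne_zero)
    · obtain ⟨cx, hcx⟩ := Nat.dvd_lcm_left nx ny
      obtain ⟨cy, hcy⟩ := Nat.dvd_lcm_right nx ny
      have h1 : (Nat.lcm nx ny) • x = 0 := by
        rw [hcx, mul_comm, mul_smul, hnxx, smul_zero]
      have h2 : (Nat.lcm nx ny) • y = 0 := by
        rw [hcy, mul_comm, mul_smul, hnyy, smul_zero]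
      rw [smul_add, h1, h2, add_zero]
  neg_mem' := by
    rintro x ⟨hx, n, hn, hs, hnx⟩
    exact ⟨Dp.neg_mem hx, n, hn, hs, by rw [smul_neg, hnx, neg_zero]⟩

theorem soc_le (Dp : AddSubgroup B) : soc Dp ≤ Dp := fun _ hx => hx.1

theorem elem_soc (Dp : AddSubgroup B) : Elem (soc Dp) := by
  constructor
  · rintro v ⟨-, n, hn, -, hnv⟩
    exact ⟨n, hn, hnv⟩
  · rintro p hp v ⟨-, n, hn, hs, hnv⟩ ⟨k, hk⟩
    obtain ⟨d, hd⟩ : ∃ d, d = Nat.gcd (p ^ k) n := ⟨_, rfl⟩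
    have hdv : d • v = 0 := by
      have hbez := Int.gcd_eq_gcd_ab ((p ^ k : ℕ) : ℤ) (n : ℤ)
      have hgcd : (Int.gcd ((p ^ k : ℕ) : ℤ) ((n : ℕ) : ℤ) : ℤ) = (d : ℤ) := by
        rw [Int.gcd_natCast_natCast, hd]
      have hz : (d : ℤ) • v = 0 := by
        rw [← hgcd, hbez, add_smul, mul_comm, mul_smul, mul_comm ((n:ℤ)), mul_smul]
        have h1 : ((p ^ k : ℕ) : ℤ) • v = 0 := by
          rw [natCast_zsmul, hk]
        have h2 : ((n : ℕ) : ℤ) • v = 0 := by rw [natCast_zsmul, hnv]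
        rw [h1, h2, smul_zero, smul_zero, add_zero]
      rw [← natCast_zsmul]
      exact hz
    have hdp : d ∣ p := by
      have hdpk : d ∣ p ^ k := hd ▸ Nat.gcd_dvd_left _ _
      have hdn : d ∣ n := hd ▸ Nat.gcd_dvd_right _ _
      have hsd : Squarefree d := hs.squarefree_of_dvd hdn
      obtain ⟨j, hj, rfl⟩ := (Nat.dvd_prime_pow hp).mp hdpk
      rcases Nat.lt_or_ge j 2 with hj2 | hj2
      · interval_cases j
        · exact one_dvd p
        · rw [pow_one]
      · exfalso
        apply hp.not_isUnit
        apply hsd p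
        calc p * p = p ^ 2 := (pow_two p).symm
          _ ∣ p ^ j := pow_dvd_pow p hj2
    obtain ⟨e, he⟩ := hdp
    rw [he, mul_comm, mul_smul, hdv, smul_zero]


/-- Inside a divisible subgroup, an elementary subgroup has a divisible essential hull. -/
theorem div_hull {Dp X : AddSubgroup B} (hDp : Div Dp) (hXD : X ≤ Dp) (hXelem : Elem X)
    (torsionSub' : AddSubgroup B)
    (htors : ∀ x : B, x ∈ torsionSub' ↔ ∃ n : ℕ, 0 < n ∧ n • x = 0) :
    ∃ H, X ≤ H ∧ H ≤ Dp ∧ Div H ∧ Ess X H := by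
  set TD := Dp ⊓ torsionSub' with hTD
  have hTDdiv : Div TD := by
    rintro v ⟨hvD, hvT⟩ n hn
    obtain ⟨m, hm, hmv⟩ := (htors v).mp hvT
    obtain ⟨w, hw, hwv⟩ := hDp v hvD n hn
    refine ⟨w, ⟨hw, (htors w).mpr ⟨m * n, Nat.mul_pos hm hn, ?_⟩⟩, hwv⟩
    rw [mul_smul, hwv, hmv]
  have hXTD : X ≤ TD := fun x hx =>
    ⟨hXD hx, (htors x).mpr (hXelem.1 x hx)⟩
  have hXsoc : X ≤ soc TD := by
    intro x hx
    obtain ⟨n, hn, hsq, hnx⟩ := hXelem.squarefree_order x hx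
    exact ⟨hXTD hx, n, hn, hsq, hnx⟩
  obtain ⟨W, hWsoc, hXW, hXWsup⟩ := elem_compl (elem_soc TD) hXsoc
  obtain ⟨H, ⟨hHTD, hXH, hWH⟩, hmax⟩ := exists_maximal_zorn TD X W hXTD
    (by rw [inf_comm]; exact hXW)
  have hHDp : H ≤ Dp := le_trans hHTD inf_le_left
  refine ⟨H, hXH, hHDp, ?_, ?_⟩
  · -- divisibility of H
    have hprime : ∀ p : ℕ, p.Prime → ∀ z ∈ H, ∃ y ∈ H, p • y = z := by
      intro p hp z hz
      obtain ⟨y₀, hy₀, hy₀z⟩ := hTDdiv z (hHTD hz) p hp.pos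
      set Y' := H ⊔ AddSubgroup.zmultiples y₀ with hY'
      by_cases hbot : W ⊓ Y' = ⊥
      · have hY'TD : Y' ≤ TD := sup_le hHTD (by
          rintro u hu
          obtain ⟨k, rfl⟩ := AddSubgroup.mem_zmultiples_iff.mp hu
          exact AddSubgroup.zsmul_mem _ hy₀ k)
        have heq := hmax Y' hY'TD (le_trans hXH le_sup_left) hbot le_sup_left
        refine ⟨y₀, ?_, hy₀z⟩
        rw [← heq]
        exact AddSubgroup.mem_sup_right (AddSubgroup.mem_zmultiples y₀)
      · obtain ⟨w, hw, hw0⟩ := exists_ne_zero_of_ne_bot hbot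
        obtain ⟨hwW, hwY'⟩ := hw
        obtain ⟨h, hh, u, hu, huw⟩ := AddSubgroup.mem_sup.mp hwY'
        obtain ⟨k, rfl⟩ := AddSubgroup.mem_zmultiples_iff.mp hu
        by_cases hpk : (p:ℤ) ∣ k
        · exfalso
          obtain ⟨k', rfl⟩ := hpk
          have hsmul : ((p:ℤ) * k') • y₀ = k' • z := by
            rw [mul_comm, mul_smul, natCast_zsmul, hy₀z]
          have hwH : w ∈ H := by
            rw [← huw, hsmul]
            exact AddSubgroup.add_mem _ hh (AddSubgroup.zsmul_mem _ hz k')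
          have : w ∈ W ⊓ H := ⟨hwW, hwH⟩
          rw [hWH] at this
          exact hw0 this
        · obtain ⟨a, b, hab⟩ := int_coprime_of_prime_not_dvd hp hpk
          have hy₀eq : y₀ = a • (k • y₀) + b • ((p:ℤ) • y₀) := by
            calc y₀ = (a * k + b * (p:ℤ)) • y₀ := by rw [hab, one_smul]
              _ = (a * k) • y₀ + (b * (p:ℤ)) • y₀ := add_smul _ _ y₀
              _ = a • (k • y₀) + b • ((p:ℤ) • y₀) := by rw [mul_smul, mul_smul]
          have hky₀ : k • y₀ = w - h := by rw [← huw]; abel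
          have hpy₀ : (p:ℤ) • y₀ = z := by rw [natCast_zsmul, hy₀z]
          -- y₀ = a•w + (b•z - a•h)
          have hy₀eq2 : y₀ = a • w + (b • z - a • h) := by
            rw [hy₀eq, hky₀, hpy₀, smul_sub]; abel
          set w₁ := a • w with hw₁
          set h₁ := b • z - a • h with hh₁
          have hw₁W : w₁ ∈ W := AddSubgroup.zsmul_mem _ hwW a
          have hh₁H : h₁ ∈ H := AddSubgroup.sub_mem _ (AddSubgroup.zsmul_mem _ hz b)
            (AddSubgroup.zsmul_mem _ hh a)
          have hzeq : z = p • w₁ + p • h₁ := by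
            rw [← smul_add, ← hy₀eq2, hy₀z]
          have hpw₁ : p • w₁ ∈ W ⊓ H := by
            constructor
            · exact AddSubgroup.nsmul_mem _ hw₁W p
            · have : p • w₁ = z - p • h₁ := by rw [hzeq]; abel
              rw [this]
              exact AddSubgroup.sub_mem _ hz (AddSubgroup.nsmul_mem _ hh₁H p)
          rw [hWH] at hpw₁
          refine ⟨h₁, hh₁H, ?_⟩
          rw [hzeq, hpw₁, zero_add]
    -- general divisibility by strong induction
    intro v hv n hn
    induction n using Nat.strong_induction_on generalizing v with
    | _ n ih =>
      rcases eq_or_lt_of_le (show 1 ≤ n from hn) with h1 | h1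
      · exact ⟨v, hv, by rw [← h1]; simp⟩
      · have hn1 : n ≠ 1 := by omega
        set p := n.minFac with hp
        have hpp : p.Prime := Nat.minFac_prime hn1
        set m := n / p with hm
        have hpm : p * m = n := Nat.mul_div_cancel' (Nat.minFac_dvd n)
        have hm0 : 0 < m := by
          rcases Nat.eq_zero_or_pos m with h | h
          · rw [h, mul_zero] at hpm; omega
          · exact h
        have hmn : m < n := by
          calc m = 1 * m := (one_mul m).symm
            _ < p * m := (Nat.mul_lt_mul_right hm0).mpr hpp.one_lt
            _ = n := hpm
        obtain ⟨u, hu, hup⟩ := hprime p hpp v hv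
        obtain ⟨y, hy, hym⟩ := ih m hmn u hu hm0
        refine ⟨y, hy, ?_⟩
        rw [← hpm, mul_smul, hym, hup]
  · -- essentiality of X in H
    suffices aux : ∀ n : ℕ, ∀ z ∈ H, z ≠ 0 → 0 < n → n • z = 0 →
        ∃ m : ℤ, m • z ∈ X ∧ m • z ≠ 0 by
      intro z hz hz0
      obtain ⟨n, hn, hnz⟩ := (htors z).mp (hHTD hz).2
      exact aux n z hz hz0 hn hnz
    intro n
    induction n using Nat.strong_induction_on with
    | _ n ih =>
      intro z hz hz0 hn hnz
      rcases eq_or_lt_of_le (show 1 ≤ n from hn) with h1 | h1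
      · exfalso; apply hz0
        have := hnz; rw [← h1] at this; simpa using this
      · have hn1 : n ≠ 1 := by omega
        set p := n.minFac with hp
        have hpp : p.Prime := Nat.minFac_prime hn1
        set m := n / p with hm
        have hpm : p * m = n := Nat.mul_div_cancel' (Nat.minFac_dvd n)
        have hm0 : 0 < m := by
          rcases Nat.eq_zero_or_pos m with h | h
          · rw [h, mul_zero] at hpm; omega
          · exact h
        have hmn : m < n := by
          calc m = 1 * m := (one_mul m).symm
            _ < p * m := (Nat.mul_lt_mul_right hm0).mpr hpp.one_lt
            _ = n := hpm
        set u := m • z with hu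
        have huH : u ∈ H := AddSubgroup.nsmul_mem _ hz m
        have hpu : p • u = 0 := by
          rw [hu, smul_smul, hpm, hnz]
        by_cases hu0 : u = 0
        · exact ih m hmn z hz hz0 hm0 hu0
        · have husoc : u ∈ soc TD := ⟨hHTD huH, p, hpp.pos, hpp.prime.squarefree, hpu⟩
          rw [← hXWsup] at husoc
          obtain ⟨x, hx, w', hw', hxw⟩ := AddSubgroup.mem_sup.mp husoc
          have hw'H : w' ∈ H := by
            have : w' = u - x := by rw [← hxw]; abel
            rw [this]
            exact AddSubgroup.sub_mem _ huH (hXH hx)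
          have : w' ∈ W ⊓ H := ⟨hw', hw'H⟩
          rw [hWH] at this
          rw [this, add_zero] at hxw
          refine ⟨(m : ℤ), ?_, ?_⟩
          · rw [natCast_zsmul, ← hu, ← hxw]; exact hx
          · rw [natCast_zsmul, ← hu]; exact hu0


variable {B : Type*} [AddCommGroup B]

theorem div_of_isDivisibleGroup (V : AddSubgroup B) (h : IsDivisibleGroup ↥V) : Div V := by
  intro v hv n hn
  obtain ⟨y, hy⟩ := h ⟨v, hv⟩ n hn
  refine ⟨(y : B), y.2, ?_⟩
  have := congrArg Subtype.val hy
  simpa using this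

theorem elem_of_isElementaryGroup (V : AddSubgroup B) (h : IsElementaryGroup ↥V) : Elem V := by
  constructor
  · intro v hv
    obtain ⟨n, hn, hnv⟩ := h.1 ⟨v, hv⟩
    refine ⟨n, hn, ?_⟩
    have := congrArg Subtype.val hnv
    simpa using this
  · rintro p hp v hv ⟨k, hk⟩
    have hmem : (⟨v, hv⟩ : ↥V) ∈ pComponent ↥V p := by
      refine ⟨k, ?_⟩
      apply Subtype.ext
      simpa using hk
    have := h.2 p hp ⟨v, hv⟩ hmem
    simpa using congrArg Subtype.val this

end DplusEAux

open DplusEAux in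
theorem DplusE_subgroup_essentialInSummand (B : Type*) [AddCommGroup B]
    (hB : IsDplusE B) (A : AddSubgroup B) (hA : IsDplusE ↥A) :
    EssentialInSummand A := by
  classical
  obtain ⟨D, E, hDE, hDdiv', hEel'⟩ := hB
  have hDdiv : DplusEAux.Div D := div_of_isDivisibleGroup D hDdiv'
  have hEel : Elem E := elem_of_isElementaryGroup E hEel'
  have hDEinf : D ⊓ E = ⊥ := disjoint_iff.mp hDE.disjoint
  have hDEsup : D ⊔ E = ⊤ := codisjoint_iff.mp hDE.codisjoint
  obtain ⟨D₀, E₀, hA0, hD₀, hE₀⟩ := hA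
  set DA := D₀.map A.subtype with hDA_def
  set EA := E₀.map A.subtype with hEA_def
  have hDAdiv : DplusEAux.Div DA := (div_of_isDivisibleGroup D₀ hD₀).map A.subtype
  have hEAel : Elem EA :=
    (elem_of_isElementaryGroup E₀ hE₀).map A.subtype A.subtype_injective
  have hDAle : DA ≤ A := by rintro x ⟨a, -, rfl⟩; exact a.2
  have hEAle : EA ≤ A := by rintro x ⟨a, -, rfl⟩; exact a.2
  have hDAEAinf : DA ⊓ EA = ⊥ := by
    rw [eq_bot_iff]; rintro x ⟨⟨a, ha, rfl⟩, ⟨b, hb, hba⟩⟩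
    have hab : b = a := A.subtype_injective hba
    have h1 : a ∈ D₀ ⊓ E₀ := ⟨ha, hab ▸ hb⟩
    rw [disjoint_iff.mp hA0.disjoint] at h1
    have : a = 0 := h1
    rw [this]
    simp
  have hDAEAsup : DA ⊔ EA = A := by
    rw [hDA_def, hEA_def, ← AddSubgroup.map_sup, codisjoint_iff.mp hA0.codisjoint,
      ← AddMonoidHom.range_eq_map, AddSubgroup.range_subtype]
  -- Step 1: complement of DA containing EA
  obtain ⟨C, hEAC, hDACinf, hDACsup⟩ := compl_containing DA EA hDAdiv hDAEAinf
  obtain ⟨πC, hπC1, hπC2, hπC3, hπC4⟩ := proj_of_compl C DA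
    (by rw [inf_comm]; exact hDACinf) (by rw [sup_comm]; exact hDACsup)
  set D' := D.map πC with hD'def
  have hD'div : DplusEAux.Div D' := hDdiv.map πC
  have hD'C : D' ≤ C := by rintro x ⟨d, -, rfl⟩; exact hπC3 d
  have hCD_D' : ∀ x, x ∈ C → x ∈ D → x ∈ D' := fun x hxC hxD => ⟨x, hxD, hπC1 x hxC⟩
  obtain ⟨E', hE'C, hD'E'inf, hD'E'sup⟩ := compl_in_of_div D' C hD'div hD'C
  have hdecomp : ∀ x : B, ∃ d ∈ D, ∃ e ∈ E, d + e = x := by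
    intro x
    exact AddSubgroup.mem_sup.mp (by rw [hDEsup]; trivial)
  have hE'elem : Elem E' := by
    constructor
    · intro x hx
      obtain ⟨d, hd, e, he, hde⟩ := hdecomp x
      obtain ⟨n, hn, hne⟩ := hEel.1 e he
      refine ⟨n, hn, ?_⟩
      have hnx : n • x ∈ D' := by
        apply hCD_D' _ (AddSubgroup.nsmul_mem _ (hE'C hx) n)
        rw [← hde, smul_add, hne, add_zero]
        exact AddSubgroup.nsmul_mem _ hd n
      have h2 : n • x ∈ D' ⊓ E' := ⟨hnx, AddSubgroup.nsmul_mem _ hx n⟩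
      rwa [hD'E'inf] at h2
    · rintro p hp x hx ⟨k, hk⟩
      obtain ⟨d, hd, e, he, hde⟩ := hdecomp x
      have hsum : p ^ k • d + p ^ k • e = 0 := by rw [← smul_add, hde, hk]
      have h1 : p ^ k • d = - (p ^ k • e) := eq_neg_of_add_eq_zero_left hsum
      have h2 : p ^ k • d ∈ D ⊓ E := ⟨AddSubgroup.nsmul_mem _ hd _,
        by rw [h1]; exact AddSubgroup.neg_mem _ (AddSubgroup.nsmul_mem _ he _)⟩
      rw [hDEinf] at h2
      have h3 : p ^ k • e = 0 := by
        have := h1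
        rw [(h2 : p ^ k • d = 0)] at this
        exact neg_eq_zero.mp this.symm
      have hpe : p • e = 0 := hEel.2 p hp e he ⟨k, h3⟩
      have hpx : p • x ∈ D' ⊓ E' := by
        constructor
        · apply hCD_D' _ (AddSubgroup.nsmul_mem _ (hE'C hx) p)
          rw [← hde, smul_add, hpe, add_zero]
          exact AddSubgroup.nsmul_mem _ hd p
        · exact AddSubgroup.nsmul_mem _ hx p
      rwa [hD'E'inf] at hpx
  -- split EA
  have hXelem : Elem (EA ⊓ D') := Elem.mono inf_le_left hEAel
  obtain ⟨Y, hYEA, hXYinf, hXYsup⟩ := elem_compl hEAel (inf_le_left : EA ⊓ D' ≤ EA)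
  have hYD' : Y ⊓ D' = ⊥ := by
    rw [eq_bot_iff]; rintro z ⟨hzY, hzD'⟩
    have h1 : z ∈ (EA ⊓ D') ⊓ Y := ⟨⟨hYEA hzY, hzD'⟩, hzY⟩
    rwa [hXYinf] at h1
  obtain ⟨H, hXH, hHD', hHdiv, hessXH⟩ := div_hull hD'div
    (inf_le_right : EA ⊓ D' ≤ D') hXelem (torsionSub B) (fun x => Iff.rfl)
  obtain ⟨D'', hD''D', hHD''inf, hHD''sup⟩ := compl_in_of_div H D' hHdiv hHD'
  have hDDAE'inf : E' ⊓ (D' ⊔ DA) = ⊥ := by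
    rw [eq_bot_iff]; rintro z ⟨hzE', hzsup⟩
    obtain ⟨d', hd', a, ha, hda⟩ := AddSubgroup.mem_sup.mp hzsup
    have haC : a ∈ C := by
      have h1 : a = z - d' := by rw [← hda]; abel
      rw [h1]; exact AddSubgroup.sub_mem _ (hE'C hzE') (hD'C hd')
    have h2 : a ∈ DA ⊓ C := ⟨ha, haC⟩
    rw [hDACinf] at h2
    have ha0 : a = 0 := h2
    rw [ha0, add_zero] at hda
    have h3 : z ∈ D' ⊓ E' := ⟨hda ▸ hd', hzE'⟩
    rwa [hD'E'inf] at h3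
  have hDDAE'sup : E' ⊔ (D' ⊔ DA) = ⊤ := by
    rw [eq_top_iff, ← hDACsup, ← hD'E'sup]
    exact sup_le (le_trans le_sup_right le_sup_right)
      (sup_le (le_trans le_sup_left le_sup_right) le_sup_left)
  obtain ⟨π, hπ1, hπ2, hπ3, hπ4⟩ := proj_of_compl E' (D' ⊔ DA) hDDAE'inf hDDAE'sup
  have hsubC : ∀ x ∈ C, x - π x ∈ D' := by
    intro x hx
    obtain ⟨d', hd', a, ha, hda⟩ := AddSubgroup.mem_sup.mp (hπ4 x)
    have haC : a ∈ C := by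
      have h1 : a = (x - π x) - d' := by rw [← hda]; abel
      rw [h1]
      exact AddSubgroup.sub_mem _ (AddSubgroup.sub_mem _ hx (hE'C (hπ3 x))) (hD'C hd')
    have h2 : a ∈ DA ⊓ C := ⟨ha, haC⟩
    rw [hDACinf] at h2
    have ha0 : a = 0 := h2
    rw [ha0, add_zero] at hda
    rw [← hda]; exact hd'
  set P := Y.map π with hPdef
  have hPE' : P ≤ E' := by rintro x ⟨y, -, rfl⟩; exact hπ3 y
  obtain ⟨E'', hE''E', hPE''inf, hPE''sup⟩ := elem_compl hE'elem hPE'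
  set T := H ⊔ Y with hTdef
  set T'' := D'' ⊔ E'' with hT''def
  have hHC : H ≤ C := le_trans hHD' hD'C
  have hYC : Y ≤ C := le_trans hYEA hEAC
  have hTC : T ≤ C := sup_le hHC hYC
  have hT''C : T'' ≤ C := sup_le (le_trans hD''D' hD'C) (le_trans hE''E' hE'C)
  have hTT''sup : T ⊔ T'' = C := by
    refine le_antisymm (sup_le hTC hT''C) ?_
    intro c hc
    have hD'R : D' ≤ T ⊔ T'' := by
      rw [← hHD''sup]
      exact sup_le (le_trans le_sup_left le_sup_left)
        (le_trans le_sup_left le_sup_right)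
    have hYR : Y ≤ T ⊔ T'' := le_trans le_sup_right le_sup_left
    have hc1 : c - π c ∈ T ⊔ T'' := hD'R (hsubC c hc)
    have hc2 : π c ∈ T ⊔ T'' := by
      have h1 : π c ∈ P ⊔ E'' := by rw [hPE''sup]; exact hπ3 c
      obtain ⟨q, hq, e'', he'', hqe⟩ := AddSubgroup.mem_sup.mp h1
      obtain ⟨y, hy, rfl⟩ := hq
      have hπy : π y ∈ T ⊔ T'' := by
        have h2 : π y = y - (y - π y) := by abel
        rw [h2]
        exact AddSubgroup.sub_mem _ (hYR hy) (hD'R (hsubC y (hYC hy)))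
      rw [← hqe]
      exact AddSubgroup.add_mem _ hπy
        ((le_trans le_sup_right le_sup_right : E'' ≤ T ⊔ T'') he'')
    have h3 : c = (c - π c) + π c := by abel
    rw [h3]; exact AddSubgroup.add_mem _ hc1 hc2
  have hTT''inf : T ⊓ T'' = ⊥ := by
    rw [eq_bot_iff]
    rintro z ⟨hz1, hz2⟩
    obtain ⟨h, hh, y, hy, hhy⟩ := AddSubgroup.mem_sup.mp hz1
    obtain ⟨d'', hd'', e'', he'', hde⟩ := AddSubgroup.mem_sup.mp hz2
    have hπh : π h = 0 := hπ2 h (AddSubgroup.mem_sup_left (hHD' hh))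
    have hπd : π d'' = 0 := hπ2 d'' (AddSubgroup.mem_sup_left (hD''D' hd''))
    have hπe : π e'' = e'' := hπ1 e'' (hE''E' he'')
    have hπz1 : π z = π y := by rw [← hhy, map_add, hπh, zero_add]
    have hπz2 : π z = e'' := by rw [← hde, map_add, hπd, zero_add, hπe]
    have he''0 : e'' = 0 := by
      have h4 : e'' ∈ P ⊓ E'' := ⟨by rw [← hπz2, hπz1]; exact ⟨y, hy, rfl⟩, he''⟩
      rwa [hPE''inf] at h4
    have hπy0 : π y = 0 := by rw [← hπz1, hπz2, he''0]
    have hy0 : y = 0 := by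
      have hyD' : y ∈ D' := by
        have h5 := hsubC y (hYC hy)
        rwa [hπy0, sub_zero] at h5
      have h6 : y ∈ Y ⊓ D' := ⟨hy, hyD'⟩
      rwa [hYD'] at h6
    have hz_h : z = h := by rw [← hhy, hy0, add_zero]
    have hz_d : z = d'' := by rw [← hde, he''0, add_zero]
    have h7 : z ∈ H ⊓ D'' := ⟨hz_h ▸ hh, hz_d ▸ hd''⟩
    rwa [hHD''inf] at h7
  have hEAT : EA ≤ T := by
    rw [← hXYsup]
    exact sup_le (le_trans hXH le_sup_left) le_sup_right
  have hDAT : DA ⊓ T = ⊥ := by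
    rw [eq_bot_iff]; rintro z ⟨hz1, hz2⟩
    have h1 : z ∈ DA ⊓ C := ⟨hz1, hTC hz2⟩
    rwa [hDACinf] at h1
  have hHY : H ⊓ Y = ⊥ := by
    rw [eq_bot_iff]; rintro z ⟨hz1, hz2⟩
    have h1 : z ∈ Y ⊓ D' := ⟨hz2, hHD' hz1⟩
    rwa [hYD'] at h1
  have hessEAT : Ess EA T := by
    rw [← hXYsup]
    exact Ess.sup hessXH (Ess.refl Y) hXH le_rfl hHY
  have hessAS : Ess A (DA ⊔ T) := by
    rw [← hDAEAsup]
    exact Ess.sup (Ess.refl DA) hessEAT le_rfl hEAT hDAT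
  refine ⟨DA ⊔ T, T'', ⟨disjoint_iff.mpr ?_, codisjoint_iff.mpr ?_⟩, ?_, ?_⟩
  · rw [eq_bot_iff]; rintro z ⟨hz1, hz2⟩
    obtain ⟨a, ha, t, ht, hat⟩ := AddSubgroup.mem_sup.mp hz1
    have haC : a ∈ C := by
      have h1 : a = z - t := by rw [← hat]; abel
      rw [h1]; exact AddSubgroup.sub_mem _ (hT''C hz2) (hTC ht)
    have ha0 : a = 0 := by
      have h2 : a ∈ DA ⊓ C := ⟨ha, haC⟩
      rwa [hDACinf] at h2
    have hzt : z = t := by rw [← hat, ha0, zero_add]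
    have h3 : z ∈ T ⊓ T'' := ⟨hzt ▸ ht, hz2⟩
    rwa [hTT''inf] at h3
  · rw [sup_assoc, hTT''sup, hDACsup]
  · rw [← hDAEAsup]
    exact sup_le le_sup_left (le_trans hEAT le_sup_right)
  · intro Xs hXs hXsne hbot
    obtain ⟨x, hx, hx0⟩ := exists_ne_zero_of_ne_bot hXsne
    obtain ⟨n, hn1, hn2⟩ := hessAS x (hXs hx) hx0
    have h1 : n • x ∈ A ⊓ Xs := ⟨hn1, AddSubgroup.zsmul_mem _ hx n⟩
    rw [hbot] at h1
    exact hn2 h1
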